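/- arXiv:1911.01137 — 3 statements merged into one kernel-verified Lean document; each statement's English description precedes it below -/
import Mathlib

section
/- Let E be an equivalence relation on a non-empty Polish space S. If E (viewed as a subset of S × S) is meagre, then there exist uncountably many (indeed continuum many) pairwise E-inequivalent elements of S; more precisely, there is a non-empty perfect subset P ⊆ S such that no two distinct elements of P are E-related. -/
/-!
The complement of the meagre set `E ⊆ S × S` contains the intersection of a decreasing sequence
of dense open sets `Uₙ`. In a complete metric for `S`, build a Cantor scheme of nonempty open sets
`A l` (`l : List Bool`) with nested closures and vanishing diameters such that distinct pieces of
level `n` satisfy `A l₁ ×ˢ A l₂ ⊆ Uₙ`; a level is obtained by shrinking the pieces pair by pair,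
using that the dense open `Uₙ` meets every nonempty open rectangle. The induced map from Cantor
space is continuous and sends distinct branches to pairs lying in every `Uₙ`, hence to
`E`-inequivalent points; by reflexivity of `E` it is injective, so its image is perfect.
-/

open Set Function Filter Topology CantorScheme PiNat
open scoped ENNReal

section Meagre

variable {X : Type*} [TopologicalSpace X]

theorem IsMeagre.exists_antitone_isOpen_dense_iInter_subset_compl {s : Set X} (hs : IsMeagre s) :
    ∃ U : ℕ → Set X, Antitone U ∧ (∀ n, IsOpen (U n)) ∧ (∀ n, Dense (U n)) ∧ ⋂ n, U n ⊆ sᶜ := by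
  obtain ⟨T, hTo, hTd, hTc, hTs⟩ := mem_residual_iff.mp hs
  obtain ⟨g, hg⟩ := (hTc.insert univ).exists_eq_range (insert_nonempty _ _)
  have hg_mem : ∀ k, g k ∈ insert univ T := fun k => hg ▸ mem_range_self k
  have hgo : ∀ t ∈ range g, IsOpen t := by
    rintro _ ⟨k, rfl⟩
    rcases hg_mem k with h | h
    exacts [h ▸ isOpen_univ, hTo _ h]
  have hgd : ∀ t ∈ range g, Dense t := by
    rintro _ ⟨k, rfl⟩
    rcases hg_mem k with h | h
    exacts [h ▸ dense_univ, hTd _ h]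
  have himage : ∀ n, g '' Iic n ⊆ range g := fun n => image_subset_range g _
  refine ⟨fun n => ⋂₀ (g '' Iic n),
    fun m n h => sInter_subset_sInter (image_mono (Iic_subset_Iic.2 h)),
    fun n => ((finite_Iic n).image g).isOpen_sInter fun t ht => hgo t (himage n ht),
    fun n => ((finite_Iic n).image g).dense_sInter (fun t ht => hgo t (himage n ht))
      fun t ht => hgd t (himage n ht), fun x hx => hTs fun t ht => ?_⟩
  obtain ⟨k, rfl⟩ : t ∈ range g := hg ▸ mem_insert_of_mem _ ht
  exact mem_iInter.mp hx k _ (mem_image_of_mem g self_mem_Iic)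

end Meagre

section Shrinking

variable {X Y ι : Type*} [TopologicalSpace X] [TopologicalSpace Y]

theorem Dense.exists_prod_subset {U : Set (X × Y)} (hUd : Dense U) (hUo : IsOpen U)
    {A : Set X} {B : Set Y} (hAo : IsOpen A) (hA : A.Nonempty) (hBo : IsOpen B)
    (hB : B.Nonempty) :
    ∃ A' ⊆ A, ∃ B' ⊆ B, IsOpen A' ∧ A'.Nonempty ∧ IsOpen B' ∧ B'.Nonempty ∧ A' ×ˢ B' ⊆ U := by
  obtain ⟨p, hpAB, hpU⟩ := hUd.inter_open_nonempty (A ×ˢ B) (hAo.prod hBo) (hA.prod hB)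
  obtain ⟨u, v, hu, hv, hpu, hpv, huv⟩ := isOpen_prod_iff.mp hUo p.1 p.2 hpU
  exact ⟨A ∩ u, inter_subset_left, B ∩ v, inter_subset_left, hAo.inter hu, ⟨p.1, hpAB.1, hpu⟩,
    hBo.inter hv, ⟨p.2, hpAB.2, hpv⟩, (prod_mono inter_subset_right inter_subset_right).trans huv⟩

theorem Dense.exists_le_prod_subset {U : Set (X × X)} (hUd : Dense U) (hUo : IsOpen U)
    {W : ι → Set X} (hW : ∀ k, IsOpen (W k) ∧ (W k).Nonempty) {i j : ι} (hij : i ≠ j) :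
    ∃ W' ≤ W, (∀ k, IsOpen (W' k) ∧ (W' k).Nonempty) ∧ W' i ×ˢ W' j ⊆ U := by
  classical
  obtain ⟨A, hA, B, hB, hAo, hAne, hBo, hBne, hAB⟩ :=
    hUd.exists_prod_subset hUo (hW i).1 (hW i).2 (hW j).1 (hW j).2
  refine ⟨update (update W i A) j B, fun k => ?_, fun k => ?_, ?_⟩
  · simp only [update_apply]
    split_ifs with hkj hki
    exacts [hkj ▸ hB, hki ▸ hA, subset_rfl]
  · simp only [update_apply]
    split_ifs
    exacts [⟨hBo, hBne⟩, ⟨hAo, hAne⟩, hW k]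
  · simpa [update_of_ne hij] using hAB

theorem Dense.exists_le_forall_prod_subset {U : Set (X × X)} (hUd : Dense U) (hUo : IsOpen U)
    {W : ι → Set X} (hW : ∀ k, IsOpen (W k) ∧ (W k).Nonempty) {Q : Set (ι × ι)} (hQ : Q.Finite) :
    ∃ W' ≤ W, (∀ k, IsOpen (W' k) ∧ (W' k).Nonempty) ∧
      ∀ p ∈ Q, p.1 ≠ p.2 → W' p.1 ×ˢ W' p.2 ⊆ U := by
  induction Q, hQ using Set.Finite.induction_on with
  | empty => exact ⟨W, le_rfl, hW, by simp⟩
  | @insert q Q _ _ ih =>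
    obtain ⟨W₁, hW₁, hW₁o, hQ⟩ := ih
    by_cases hq : q.1 = q.2
    · exact ⟨W₁, hW₁, hW₁o, by rintro p (rfl | hp) hne; exacts [absurd hq hne, hQ p hp hne]⟩
    obtain ⟨W₂, hW₂, hW₂o, hq₂⟩ := hUd.exists_le_prod_subset hUo hW₁o hq
    refine ⟨W₂, hW₂.trans hW₁, hW₂o, ?_⟩
    rintro p (rfl | hp) hne
    exacts [hq₂, (prod_mono (hW₂ _) (hW₂ _)).trans (hQ p hp hne)]

end Shrinking

theorem IsOpen.exists_isOpen_closure_subset_ediam_le {X : Type*} [PseudoEMetricSpace X]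
    {U : Set X} (hUo : IsOpen U) (hU : U.Nonempty) {ε : ℝ≥0∞} (hε : 0 < ε) :
    ∃ V, IsOpen V ∧ V.Nonempty ∧ closure V ⊆ U ∧ Metric.ediam V ≤ ε := by
  obtain ⟨x, hx⟩ := hU
  obtain ⟨W, ⟨hxW, hWo⟩, hWU⟩ := (hasBasis_opens_closure x).mem_iff.mp (hUo.mem_nhds hx)
  refine ⟨W ∩ Metric.eball x (ε / 2), hWo.inter Metric.isOpen_eball,
    ⟨x, hxW, Metric.mem_eball_self (ENNReal.half_pos hε.ne')⟩,
    (closure_mono inter_subset_left).trans hWU, ?_⟩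
  calc Metric.ediam (W ∩ Metric.eball x (ε / 2))
      ≤ Metric.ediam (Metric.eball x (ε / 2)) := Metric.ediam_mono inter_subset_right
    _ ≤ 2 * (ε / 2) := Metric.ediam_eball_le
    _ = ε := ENNReal.mul_div_cancel two_ne_zero ENNReal.ofNat_ne_top

section CantorScheme

variable {β X : Type*} [PseudoMetricSpace X]

theorem exists_refinement_prod_subset [Finite β] {U : Set (X × X)} (hUd : Dense U)
    (hUo : IsOpen U) {ε : ℝ≥0∞} (hε : 0 < ε) (n : ℕ) {A : List β → Set X}
    (hA : ∀ l, IsOpen (A l) ∧ (A l).Nonempty) :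
    ∃ B : List β → Set X, (∀ l, IsOpen (B l) ∧ (B l).Nonempty) ∧
      (∀ l b, closure (B (b :: l)) ⊆ A l) ∧ (∀ l, Metric.ediam (B l) ≤ ε) ∧
      ∀ l₁ l₂, l₁.length = n → l₂.length = n → l₁ ≠ l₂ → B l₁ ×ˢ B l₂ ⊆ U := by
  choose V hVo hVne hVA hVε using fun l : List β =>
    (hA l.tail).1.exists_isOpen_closure_subset_ediam_le (hA l.tail).2 hε
  obtain ⟨B, hBV, hB, hBU⟩ := hUd.exists_le_forall_prod_subset hUo (fun l => ⟨hVo l, hVne l⟩)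
    ((List.finite_length_eq β n).prod (List.finite_length_eq β n))
  exact ⟨B, hB, fun l b => (closure_mono (hBV _)).trans (hVA _),
    fun l => (Metric.ediam_mono (hBV l)).trans (hVε l),
    fun l₁ l₂ h₁ h₂ hne => hBU (l₁, l₂) ⟨h₁, h₂⟩ hne⟩

theorem exists_cantorScheme_prod_subset [Finite β] [Nonempty X] {U : ℕ → Set (X × X)}
    (hUd : ∀ n, Dense (U n)) (hUo : ∀ n, IsOpen (U n)) :
    ∃ A : List β → Set X, (∀ l, (A l).Nonempty) ∧ ClosureAntitone A ∧ VanishingDiam A ∧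
      ∀ l₁ l₂, l₁.length = l₂.length → l₁ ≠ l₂ → A l₁ ×ˢ A l₂ ⊆ U l₁.length := by
  let Level := {A : List β → Set X // ∀ l, IsOpen (A l) ∧ (A l).Nonempty}
  choose next hnext hclosure hdiam hU using fun n (A : Level) =>
    exists_refinement_prod_subset (hUd (n + 1)) (hUo (n + 1))
      (ENNReal.inv_pos.2 (ENNReal.natCast_ne_top (n + 1))) (n + 1) A.2
  let level : ℕ → Level := fun n =>
    Nat.rec ⟨fun _ => univ, fun _ => ⟨isOpen_univ, univ_nonempty⟩⟩
      (fun n A => ⟨next n A, hnext n A⟩) n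
  have hlevel_diam : ∀ l, Metric.ediam ((level l.length).1 l) ≤ (l.length : ℝ≥0∞)⁻¹
    | [] => by simp
    | _ :: _ => by exact_mod_cast hdiam _ _ _
  have hlevel_U : ∀ n l₁ l₂, l₁.length = n → l₂.length = n → l₁ ≠ l₂ →
      (level n).1 l₁ ×ˢ (level n).1 l₂ ⊆ U n
    | 0, l₁, l₂, h₁, h₂, hne => absurd ((List.length_eq_zero_iff.1 h₁).trans
        (List.length_eq_zero_iff.1 h₂).symm) hne
    | n + 1, l₁, l₂, h₁, h₂, hne => hU n (level n) l₁ l₂ h₁ h₂ hne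
  refine ⟨fun l => (level l.length).1 l, fun l => ((level _).2 l).2,
    fun l b => hclosure _ _ l b, fun x => ?_, fun l₁ l₂ h hne => ?_⟩
  · refine tendsto_of_tendsto_of_tendsto_of_le_of_le tendsto_const_nhds
      ENNReal.tendsto_inv_nat_nhds_zero (fun _ => bot_le) fun n => ?_
    simpa only [res_length] using hlevel_diam (res x n)
  · simpa only [h] using hlevel_U l₂.length l₁ l₂ h rfl hne

theorem exists_continuous_forall_ne_mem_iInter [TopologicalSpace β] [DiscreteTopology β] [Finite β]
    [CompleteSpace X] [Nonempty X] {U : ℕ → Set (X × X)} (hanti : Antitone U)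
    (hUd : ∀ n, Dense (U n)) (hUo : ∀ n, IsOpen (U n)) :
    ∃ f : (ℕ → β) → X, Continuous f ∧ ∀ x y, x ≠ y → (f x, f y) ∈ ⋂ n, U n := by
  obtain ⟨A, hne, hclosure, hdiam, hU⟩ := exists_cantorScheme_prod_subset (β := β) hUd hUo
  have hdom : ∀ x, x ∈ (inducedMap A).1 := by simp [hclosure.map_of_vanishingDiam hdiam hne]
  refine ⟨fun x => (inducedMap A).2 ⟨x, hdom x⟩, hdiam.map_continuous.comp (by fun_prop),
    fun x y hxy => mem_iInter.2 fun k => ?_⟩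
  obtain ⟨m, hm⟩ := Function.ne_iff.mp hxy
  set n := max k (m + 1)
  have hres : res x n ≠ res y n := fun h => hm (res_eq_res.mp h (by omega))
  have hmem := hU (res x n) (res y n) (by simp only [res_length]) hres
    (mk_mem_prod (map_mem ⟨x, hdom x⟩ n) (map_mem ⟨y, hdom y⟩ n))
  rw [res_length] at hmem
  exact hanti (le_max_left k (m + 1)) hmem

end CantorScheme

instance {α : Type*} [TopologicalSpace α] [Nontrivial α] : PerfectSpace (ℕ → α) := by
  refine perfectSpace_iff_forall_not_isolated.2 fun a => ?_
  choose b hb using fun k => exists_ne (a k)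
  have : Tendsto (fun k => update a k (b k)) atTop (𝓝[≠] a) :=
    tendsto_nhdsWithin_iff.2 ⟨tendsto_pi_nhds.2 fun i => tendsto_const_nhds.congr'
      ((eventually_gt_atTop i).mono fun k hk => (update_of_ne hk.ne _ _).symm),
      Eventually.of_forall fun k h => hb k (by simpa using congrFun h k)⟩
  exact this.neBot

theorem Continuous.preperfect_range {α X : Type*} [TopologicalSpace α] [PerfectSpace α]
    [TopologicalSpace X] {f : α → X} (hf : Continuous f) (hinj : Injective f) :
    Preperfect (range f) := by
  rintro _ ⟨a, rfl⟩
  have : Tendsto f (𝓝[≠] a) (𝓝[≠] (f a) ⊓ 𝓟 (range f)) :=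
    tendsto_inf.2 ⟨tendsto_nhdsWithin_iff.2 ⟨hf.continuousAt.tendsto.mono_left nhdsWithin_le_nhds,
      eventually_nhdsWithin_of_forall fun _ hx => hinj.ne hx⟩,
      tendsto_principal.2 (Eventually.of_forall mem_range_self)⟩
  exact this.neBot

/-- Mycielski's theorem: a meagre equivalence relation on a
non-empty Polish space admits a non-empty perfect set of pairwise
inequivalent elements. -/
theorem mycielski {S : Type*} [TopologicalSpace S] [PolishSpace S] [Nonempty S]
    (E : S → S → Prop) (hE : Equivalence E)
    (hmeagre : IsMeagre {p : S × S | E p.1 p.2}) :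
    ∃ P : Set S, P.Nonempty ∧ Perfect P ∧
      ∀ x ∈ P, ∀ y ∈ P, x ≠ y → ¬ E x y := by
  let := TopologicalSpace.upgradeIsCompletelyMetrizable S
  obtain ⟨U, hanti, hUo, hUd, hUE⟩ := hmeagre.exists_antitone_isOpen_dense_iInter_subset_compl
  obtain ⟨f, hf, hfU⟩ := exists_continuous_forall_ne_mem_iInter (β := Bool) hanti hUd hUo
  have hfE : ∀ x y, x ≠ y → ¬ E (f x) (f y) := fun x y hxy => hUE (hfU x y hxy)
  have hinj : Injective f := fun x y h => by_contra fun hxy => hfE x y hxy (h ▸ hE.refl _)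
  refine ⟨range f, range_nonempty f, ⟨(isCompact_range hf).isClosed, hf.preperfect_range hinj⟩, ?_⟩
  rintro _ ⟨x, rfl⟩ _ ⟨y, rfl⟩ hne
  exact hfE x y (ne_of_apply_ne f hne)
end

section
/- Let G be a group generated by a finite set X, let E = ⊕_{i∈ℕ} E_i be an internal direct sum of non-trivial subgroups contained in the center of G, and for I ⊆ ℕ let E_I = ⟨E_i : i ∈ I⟩. Then the map from 2^ℕ (with the product topology) to N(G) (normal subgroups of G with the topology induced from 2^G) sending I to E_I is continuous. -/
/-!
The central subgroups `Eᵢ` generate an abelian group in which, by independence, every element has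
a unique decomposition `g = ∏ᶠ i, eᵢ` with `eᵢ ∈ Eᵢ` and finitely many `eᵢ ≠ 1`. Hence `g ∈ E_I`
holds exactly when the finite support of this decomposition lies in `I`, so `I ↦ [g ∈ E_I]` only
depends on finitely many coordinates of `I` (or is constantly false when `g ∉ E`).
-/

open scoped Classical

open Function Set

namespace Subgroup

variable {G N : Type*} [Group G] [Group N] {ι : Type*}

theorem iSupIndep_of_iSupIndep_map {f : G →* N} (hf : Injective f) {K : ι → Subgroup G}
    (h : iSupIndep fun i => (K i).map f) : iSupIndep K := by
  intro i
  have hi := h i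
  simp only [← map_iSup] at hi
  rw [disjoint_iff] at hi ⊢
  exact map_injective hf (by rw [map_inf_eq _ _ f hf, map_bot, hi])

section CommGroup

variable {M : Type*} [CommGroup M] {K : ι → Subgroup M}

theorem mem_biSup_iff_exists_finprod {S : Set ι} {x : M} :
    x ∈ ⨆ i ∈ S, K i ↔ ∃ e : ι → M, (∀ i, e i ∈ K i) ∧ HasFiniteMulSupport e ∧
      mulSupport e ⊆ S ∧ ∏ᶠ i, e i = x := by
  constructor
  · intro hx
    rw [iSup_subtype'] at hx
    induction hx using iSup_induction' with
    | hp i y hy =>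
      obtain ⟨i, hiS⟩ := i
      refine ⟨Pi.mulSingle i y, fun j => ?_, (finite_singleton i).subset
        Pi.mulSupport_mulSingle_subset,
        Pi.mulSupport_mulSingle_subset.trans (singleton_subset_iff.2 hiS),
        (finprod_eq_single _ i fun j hj => by simp [hj]).trans (by simp)⟩
      rcases eq_or_ne j i with rfl | hj
      · simpa using hy
      · simp [hj, one_mem]
    | h1 => exact ⟨1, fun i => one_mem _, hasFiniteMulSupport_fun_one, by simp, finprod_one⟩
    | hmul y z _ _ hy hz =>
      obtain ⟨e, he, hfin, hS, rfl⟩ := hy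
      obtain ⟨e', he', hfin', hS', rfl⟩ := hz
      exact ⟨e * e', fun i => mul_mem (he i) (he' i), hfin.mul hfin',
        (mulSupport_mul e e').trans (union_subset hS hS'), finprod_mul_distrib hfin hfin'⟩
  · rintro ⟨e, he, -, hS, rfl⟩
    refine finprod_induction (· ∈ ⨆ i ∈ S, K i) (one_mem _) (fun _ _ => mul_mem) fun i => ?_
    by_cases hi : e i = 1
    · simp [hi, one_mem]
    · exact (le_biSup K (hS hi)) (he i)

end CommGroup

end Subgroup

namespace iSupIndep

variable {ι M : Type*} [CommGroup M] {K : ι → Subgroup M}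

theorem eq_one_of_finprod_eq_one (hK : iSupIndep K) {e : ι → M} (he : ∀ i, e i ∈ K i)
    (hfin : HasFiniteMulSupport e) (h : ∏ᶠ i, e i = 1) : e = 1 := by
  funext i
  by_contra hi
  refine hi (Subgroup.eq_one_of_noncommProd_eq_one_of_iSupIndep hfin.toFinset e
    (fun a _ b _ _ => mul_comm (e a) (e b)) K hK (fun i _ => he i) ?_ i (hfin.mem_toFinset.2 hi))
  rw [Finset.noncommProd_eq_prod, ← finprod_eq_prod e hfin, h]

theorem eq_of_finprod_eq (hK : iSupIndep K) {e e' : ι → M} (he : ∀ i, e i ∈ K i)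
    (he' : ∀ i, e' i ∈ K i) (hfin : HasFiniteMulSupport e) (hfin' : HasFiniteMulSupport e')
    (h : ∏ᶠ i, e i = ∏ᶠ i, e' i) : e = e' :=
  div_eq_one.1 <| hK.eq_one_of_finprod_eq_one (fun i => div_mem (he i) (he' i)) (hfin.div hfin')
    (show ∏ᶠ i, e i / e' i = 1 by rw [finprod_div_distrib hfin hfin', h, div_self'])

theorem exists_finset_mem_biSup_iff
    (hK : iSupIndep K) {x : M} (hx : x ∈ ⨆ i, K i) :
    ∃ t : Finset ι, ∀ S : Set ι, x ∈ ⨆ i ∈ S, K i ↔ ↑t ⊆ S := by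
  rw [← iSup_univ, Subgroup.mem_biSup_iff_exists_finprod] at hx
  obtain ⟨e, he, hfin, -, rfl⟩ := hx
  refine ⟨hfin.toFinset, fun S => ?_⟩
  rw [Subgroup.mem_biSup_iff_exists_finprod, hfin.coe_toFinset]
  refine ⟨fun ⟨e', he', hfin', hS, h⟩ => ?_, fun hS => ⟨e, he, hfin, hS, rfl⟩⟩
  rwa [hK.eq_of_finprod_eq he' he hfin' hfin h] at hS

open scoped IsMulCommutative in -- for the `CommGroup H` instance
theorem exists_finset_mem_biSup_iff_of_le {G : Type*} [Group G] {K : ι → Subgroup G}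
    (hK : iSupIndep K) {H : Subgroup G} [IsMulCommutative H] (hle : ∀ i, K i ≤ H) {g : G}
    (hg : g ∈ ⨆ i, K i) : ∃ t : Finset ι, ∀ S : Set ι, g ∈ ⨆ i ∈ S, K i ↔ ↑t ⊆ S := by
  have hmap : ∀ i, ((K i).subgroupOf H).map H.subtype = K i :=
    fun i => Subgroup.map_subgroupOf_eq_of_le (hle i)
  have hmem : ∀ (S : Set ι) (x : H),
      (x : G) ∈ ⨆ i ∈ S, K i ↔ x ∈ ⨆ i ∈ S, (K i).subgroupOf H := by
    intro S x
    have hmapS : (⨆ i ∈ S, (K i).subgroupOf H).map H.subtype = ⨆ i ∈ S, K i := by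
      simp only [Subgroup.map_iSup, hmap]
    rw [← hmapS]
    exact Subgroup.mem_map_iff_mem H.subtype_injective
  have hK' : iSupIndep fun i => (K i).subgroupOf H :=
    Subgroup.iSupIndep_of_iSupIndep_map H.subtype_injective (by simpa only [hmap] using hK)
  have hgH : g ∈ H := iSup_le hle hg
  have hg' : (⟨g, hgH⟩ : H) ∈ ⨆ i, (K i).subgroupOf H := by
    rwa [← iSup_univ, ← hmem, iSup_univ]
  obtain ⟨t, ht⟩ := hK'.exists_finset_mem_biSup_iff hg'
  exact ⟨t, fun S => (hmem S ⟨g, hgH⟩).trans (ht S)⟩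

end iSupIndep

theorem continuous_decide_finset_subset {ι : Type*} (t : Finset ι) :
    Continuous fun f : ι → Bool => decide (↑t ⊆ {i | f i = true}) := by
  have h : (fun f : ι → Bool => decide (↑t ⊆ {i | f i = true})) =
      (fun r : t → Bool => decide (∀ i, r i = true)) ∘ t.restrict := by
    funext f
    exact decide_eq_decide.2 (by simp [Set.subset_def])
  rw [h]
  exact continuous_of_discreteTopology.comp (Finset.continuous_restrict t)

theorem EI_continuous_general {G : Type*} [Group G]
    (E : ℕ → Subgroup G)
    (hcentral : ∀ i, E i ≤ Subgroup.center G)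
    (hind : iSupIndep E) :
    Continuous (fun f : ℕ → Bool =>
      fun g : G => decide (g ∈ ⨆ i ∈ {j : ℕ | f j = true}, E i)) := by
  refine continuous_pi fun g => ?_
  by_cases hg : g ∈ ⨆ i, E i
  · obtain ⟨t, ht⟩ := hind.exists_finset_mem_biSup_iff_of_le hcentral hg
    simp only [ht]
    exact continuous_decide_finset_subset t
  · have hS : ∀ S : Set ℕ, g ∉ ⨆ i ∈ S, E i :=
      fun S hgS => hg (iSup₂_le (fun i _ => le_iSup E i) hgS)
    simp only [hS, decide_false]
    exact continuous_const

/-- for a central internal direct sum `E = ⊕ᵢ Eᵢ` in a finitely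
generated group `G`, the map `2^ℕ → N(G) ⊆ 2^G`, `I ↦ E_I = ⟨Eᵢ : i ∈ I⟩`, is
continuous (both powers carrying the product topology). -/
theorem EI_continuous {G : Type*} [Group G]
    (X : Finset G) (hX : Subgroup.closure (X : Set G) = ⊤)
    (E : ℕ → Subgroup G)
    (hcentral : ∀ i, E i ≤ Subgroup.center G)
    (hnt : ∀ i, E i ≠ ⊥)
    (hind : iSupIndep E) :
    Continuous (fun f : ℕ → Bool =>
      fun g : G => decide (g ∈ ⨆ i ∈ {j : ℕ | f j = true}, E i)) :=
  EI_continuous_general E hcentral hind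
end

section
/- Let R be a group with a normal subgroup H such that R/H ≅ ℤ, let t ∈ R map onto a generator of R/H, and suppose L, L′ ≤ H satisfy ⋃_{k∈ℤ} t^{-k} L t^k = H and ⋃_{k∈ℤ} t^k L′ t^{-k} = H, with L ∩ L′ finite. Then the center of R is finite. -/
/-- let `R` be a group, `H ⊴ R` with `R/H ≅ ℤ`, `t ∈ R` mapping
to a generator of `R/H`, and `L, L' ≤ H` subgroups with
`⋃ₖ t⁻ᵏ L tᵏ = H`, `⋃ₖ tᵏ L' t⁻ᵏ = H` and `L ∩ L'` finite. Then the
center of `R` intersected with `H` is finite. -/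
theorem center_inter_finite {R : Type*} [Group R]
    (H : Subgroup R) [H.Normal]
    (φ : R ⧸ H ≃* Multiplicative ℤ)
    (t : R) (ht : φ ((QuotientGroup.mk' H) t) = Multiplicative.ofAdd 1)
    (L L' : Subgroup R) (hL : L ≤ H) (hL' : L' ≤ H)
    (hcovL : {x : R | ∃ k : ℤ, ∃ l ∈ L, x = t ^ (-k) * l * t ^ k} = (H : Set R))
    (hcovL' : {x : R | ∃ k : ℤ, ∃ l ∈ L', x = t ^ k * l * t ^ (-k)} = (H : Set R))
    (hLL' : Finite (L ⊓ L' : Subgroup R)) :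
    Finite (Subgroup.center R ⊓ H : Subgroup R) := by
  have hle : Subgroup.center R ⊓ H ≤ L ⊓ L' := by
    rintro z ⟨hz, hzH⟩
    replace hz : z ∈ Subgroup.center R := hz
    rw [Subgroup.mem_center_iff] at hz
    constructor
    · have : z ∈ {x : R | ∃ k : ℤ, ∃ l ∈ L, x = t ^ (-k) * l * t ^ k} := by
        rw [hcovL]; exact hzH
      obtain ⟨k, l, hl, hzl⟩ := this
      have h1 : t ^ k * z * t ^ (-k) = l := by rw [hzl]; group
      rw [hz (t ^ k)] at h1
      have : z = l := by rw [← h1]; group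
      rwa [this]
    · have : z ∈ {x : R | ∃ k : ℤ, ∃ l ∈ L', x = t ^ k * l * t ^ (-k)} := by
        rw [hcovL']; exact hzH
      obtain ⟨k, l, hl, hzl⟩ := this
      have h1 : t ^ (-k) * z * t ^ k = l := by rw [hzl]; group
      rw [hz (t ^ (-k))] at h1
      have : z = l := by rw [← h1]; group
      rwa [this]
  exact Finite.of_injective _ (Subgroup.inclusion_injective hle)
end
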